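/- Let μ be a probability measure on a measurable space Ω, let f : ℝ → ℝ be convex and differentiable with f(1) = 0, and let δ > 0. Let 𝒜 be any nonempty family of measurable subsets of Ω (the error sets attainable by a family of classifiers) and suppose inf_{A ∈ 𝒜} R_adv(A) < 1. Then a set A* ∈ 𝒜 minimizes R_adv over 𝒜 if and only if A* minimizes μ over 𝒜; that is, adversarial risk minimization and ordinary risk minimization with the 0-1 loss have exactly the same set of minimizers in the regime where the adversarial risk is below 1. -/

import Mathlib

open MeasureTheory

/-- The uncertainty set of density ratios: measurable, nonnegative functions `r` with
`∫ f (r ω) ∂μ ≤ δ` and `∫ r ω ∂μ = 1` (both integrals existing). -/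
def Uf {Ω : Type*} [MeasurableSpace Ω] (μ : Measure Ω) (f : ℝ → ℝ) (δ : ℝ) :
    Set (Ω → ℝ) :=
  {r | Measurable r ∧ (∀ ω, 0 ≤ r ω) ∧
    Integrable (fun ω => f (r ω)) μ ∧ Integrable r μ ∧
    (∫ ω, f (r ω) ∂μ) ≤ δ ∧ (∫ ω, r ω ∂μ) = 1}

/-- The adversarial risk of a classifier with error set `A` under the 0-1 loss:
the supremum of `∫_A r dμ` over density ratios `r` in the uncertainty set. -/
noncomputable def Radv {Ω : Type*} [MeasurableSpace Ω] (μ : Measure Ω)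
    (f : ℝ → ℝ) (δ : ℝ) (A : Set Ω) : ℝ :=
  sSup {x | ∃ r ∈ Uf μ f δ, x = ∫ ω in A, r ω ∂μ}

/-!
For `r` in the uncertainty set, Jensen's inequality on `A` and on `Aᶜ` bounds by `δ` the divergence
of the two-valued density equal to the averages `a` of `r` over `A` and `b` over `Aᶜ`. If
`μ A ≤ μ B`, the density equal to `b` off `B` and to the `(μ A, μ B - μ A)`-weighted average of `a`
and `b` on `B` is then feasible by convexity, and gives `B` the mass
`∫_A r + (μ B - μ A) (1 - ∫_A r) / (1 - μ A)`. Hence the adversarial risk is nondecreasing in `μ`,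
and strictly increasing while it is below `1`.
-/

open Set

lemma ConvexOn.add_mul_map_div_add_le {f : ℝ → ℝ} (hf : ConvexOn ℝ univ f) {p s : ℝ}
    (hp : 0 ≤ p) (hs : 0 ≤ s) (a b : ℝ) :
    (p + s) * f ((p * a + s * b) / (p + s)) ≤ p * f a + s * f b := by
  rcases (add_nonneg hp hs).eq_or_lt with hps | hps
  · obtain ⟨rfl, rfl⟩ : p = 0 ∧ s = 0 := ⟨by linarith, by linarith⟩
    simp
  · have h := hf.2 (mem_univ a) (mem_univ b) (div_nonneg hp hps.le) (div_nonneg hs hps.le)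
      (by rw [← add_div, div_self hps.ne'])
    simp only [smul_eq_mul] at h
    calc (p + s) * f ((p * a + s * b) / (p + s))
        = (p + s) * f (p / (p + s) * a + s / (p + s) * b) := by ring_nf
      _ ≤ (p + s) * (p / (p + s) * f a + s / (p + s) * f b) := by gcongr
      _ = p * f a + s * f b := by field_simp

section Jensen

variable {Ω : Type*} [MeasurableSpace Ω] {μ : Measure Ω} [IsFiniteMeasure μ]

lemma measureReal_mul_setIntegral_div (r : Ω → ℝ) (A : Set Ω) :
    μ.real A * ((∫ ω in A, r ω ∂μ) / μ.real A) = ∫ ω in A, r ω ∂μ := by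
  by_cases hA : μ A = 0
  · simp [Measure.restrict_eq_zero.mpr hA]
  · exact mul_div_cancel₀ _ ((measureReal_ne_zero_iff (measure_ne_top μ A)).mpr hA)

-- With the junk value `x / 0 = 0` both sides vanish on null sets.
lemma ConvexOn.measureReal_mul_map_setIntegral_div_le {f : ℝ → ℝ} (hf : ConvexOn ℝ univ f)
    {r : Ω → ℝ} (hr : Integrable r μ) (hfr : Integrable (fun ω => f (r ω)) μ) (A : Set Ω) :
    μ.real A * f ((∫ ω in A, r ω ∂μ) / μ.real A) ≤ ∫ ω in A, f (r ω) ∂μ := by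
  by_cases hA : μ A = 0
  · simp [measureReal_def, hA, Measure.restrict_eq_zero.mpr hA]
  · have hjensen := hf.map_set_average_le (hf.continuousOn isOpen_univ) isClosed_univ hA
      (measure_ne_top _ _) (by simp) hr.integrableOn hfr.integrableOn
    rw [setAverage_eq, setAverage_eq, smul_eq_mul, smul_eq_mul, inv_mul_eq_div,
      inv_mul_eq_div] at hjensen
    have hpos : 0 < μ.real A := ENNReal.toReal_pos hA (measure_ne_top μ A)
    calc μ.real A * f ((∫ ω in A, r ω ∂μ) / μ.real A)
        ≤ μ.real A * ((∫ ω in A, f (r ω) ∂μ) / μ.real A) := by gcongr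
      _ = ∫ ω in A, f (r ω) ∂μ := mul_div_cancel₀ _ hpos.ne'

end Jensen

section UncertaintySet

variable {Ω : Type*} [MeasurableSpace Ω] {μ : Measure Ω} {f : ℝ → ℝ} {δ : ℝ}

lemma setIntegral_le_one_of_mem_Uf {r : Ω → ℝ} (hr : r ∈ Uf μ f δ) (A : Set Ω) :
    ∫ ω in A, r ω ∂μ ≤ 1 :=
  hr.2.2.2.2.2 ▸ setIntegral_le_integral hr.2.2.2.1 (.of_forall hr.2.1)

variable [IsProbabilityMeasure μ]

lemma const_one_mem_Uf (hf1 : f 1 = 0) (hδ : 0 ≤ δ) : (fun _ => 1) ∈ Uf μ f δ :=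
  ⟨measurable_const, fun _ => zero_le_one, by simp [hf1], integrable_const _, by simp [hf1, hδ],
    by simp⟩

lemma piecewise_mem_Uf {B : Set Ω} [DecidablePred (· ∈ B)] (hB : MeasurableSet B) {c b : ℝ}
    (hc : 0 ≤ c) (hb : 0 ≤ b) (hmass : μ.real B * c + (1 - μ.real B) * b = 1)
    (hdiv : μ.real B * f c + (1 - μ.real B) * f b ≤ δ) :
    B.piecewise (fun _ => c) (fun _ => b) ∈ Uf μ f δ := by
  have hfr : (fun ω => f (B.piecewise (fun _ => c) (fun _ => b) ω))
      = B.piecewise (fun _ => f c) (fun _ => f b) :=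
    funext fun ω => by by_cases hω : ω ∈ B <;> simp [hω]
  have hcompl : μ.real Bᶜ = 1 - μ.real B := by rw [measureReal_compl hB, probReal_univ]
  refine ⟨measurable_const.piecewise hB measurable_const,
    fun ω => by by_cases hω : ω ∈ B <;> simp [hω, hc, hb], ?_, ?_, ?_, ?_⟩
  · rw [hfr]
    exact .piecewise hB (integrable_const _).integrableOn (integrable_const _).integrableOn
  · exact .piecewise hB (integrable_const _).integrableOn (integrable_const _).integrableOn
  · rw [hfr, integral_piecewise hB (integrable_const _).integrableOn
      (integrable_const _).integrableOn]
    simpa [hcompl] using hdiv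
  · rw [integral_piecewise hB (integrable_const _).integrableOn
      (integrable_const _).integrableOn]
    simpa [hcompl] using hmass

lemma coarsening_divergence_le_of_mem_Uf (hf : ConvexOn ℝ univ f) {r : Ω → ℝ}
    (hr : r ∈ Uf μ f δ) {A : Set Ω} (hA : MeasurableSet A) :
    μ.real A * f ((∫ ω in A, r ω ∂μ) / μ.real A)
      + (1 - μ.real A) * f ((1 - ∫ ω in A, r ω ∂μ) / (1 - μ.real A)) ≤ δ := by
  obtain ⟨-, -, hfr, hr, hdiv, hmass⟩ := hr
  have hcompl : μ.real Aᶜ = 1 - μ.real A := by rw [measureReal_compl hA, probReal_univ]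
  have hrcompl : ∫ ω in Aᶜ, r ω ∂μ = 1 - ∫ ω in A, r ω ∂μ := by
    rw [← hmass, ← integral_add_compl hA hr, add_sub_cancel_left]
  have hjA := hf.measureReal_mul_map_setIntegral_div_le hr hfr A
  have hjAc := hf.measureReal_mul_map_setIntegral_div_le hr hfr Aᶜ
  rw [hcompl, hrcompl] at hjAc
  linarith [integral_add_compl hA hfr]

lemma exists_mem_Uf_setIntegral_eq (hf : ConvexOn ℝ univ f) {r : Ω → ℝ} (hr : r ∈ Uf μ f δ)
    {A B : Set Ω} (hA : MeasurableSet A) (hB : MeasurableSet B) (hAB : μ A ≤ μ B)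
    (hA1 : μ.real A < 1) :
    ∃ r' ∈ Uf μ f δ, ∫ ω in B, r' ω ∂μ = ∫ ω in A, r ω ∂μ
      + (μ.real B - μ.real A) * (1 - ∫ ω in A, r ω ∂μ) / (1 - μ.real A) := by
  classical
  set p := μ.real A
  set q := μ.real B
  set x := ∫ ω in A, r ω ∂μ
  have hp0 : 0 ≤ p := measureReal_nonneg
  have hpq : p ≤ q := ENNReal.toReal_mono (measure_ne_top μ B) hAB
  have hx0 : 0 ≤ x := setIntegral_nonneg hA fun ω _ => hr.2.1 ω
  have hx1 : x ≤ 1 := setIntegral_le_one_of_mem_Uf hr A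
  set a := x / p
  set b := (1 - x) / (1 - p)
  set c := (p * a + (q - p) * b) / q
  have ha : 0 ≤ a := div_nonneg hx0 hp0
  have hb : 0 ≤ b := div_nonneg (by linarith) (by linarith)
  have hc : 0 ≤ c :=
    div_nonneg (add_nonneg (mul_nonneg hp0 ha) (mul_nonneg (sub_nonneg.2 hpq) hb)) (hp0.trans hpq)
  have hpa : p * a = x := measureReal_mul_setIntegral_div r A
  have hpb : (1 - p) * b = 1 - x := mul_div_cancel₀ _ (by linarith)
  have hqc : q * c = p * a + (q - p) * b := by
    rcases (hp0.trans hpq).eq_or_lt with hq | hq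
    · have hp : p = 0 := by linarith
      simp [← hq, hp]
    · exact mul_div_cancel₀ _ hq.ne'
  have hfc : q * f c ≤ p * f a + (q - p) * f b := by
    simpa using hf.add_mul_map_div_add_le hp0 (sub_nonneg.2 hpq) a b
  have hcoarse := coarsening_divergence_le_of_mem_Uf hf hr hA
  refine ⟨B.piecewise (fun _ => c) (fun _ => b), piecewise_mem_Uf hB hc hb ?_ ?_, ?_⟩
  · linear_combination hqc + hpa + hpb
  · linear_combination hfc + hcoarse
  · rw [setIntegral_congr_fun hB (piecewise_eqOn B _ _), setIntegral_const, smul_eq_mul, hqc,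
      hpa, mul_div_assoc]

end UncertaintySet

section AdversarialRisk

variable {Ω : Type*} [MeasurableSpace Ω] {μ : Measure Ω} {f : ℝ → ℝ} {δ : ℝ}

lemma setIntegral_le_Radv {r : Ω → ℝ} (hr : r ∈ Uf μ f δ) (A : Set Ω) :
    ∫ ω in A, r ω ∂μ ≤ Radv μ f δ A :=
  le_csSup ⟨1, by rintro _ ⟨r', hr', rfl⟩; exact setIntegral_le_one_of_mem_Uf hr' A⟩ ⟨r, hr, rfl⟩

variable [IsProbabilityMeasure μ]

lemma Radv_le_of_forall_le (hf1 : f 1 = 0) (hδ : 0 ≤ δ) {A : Set Ω} {y : ℝ}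
    (h : ∀ r ∈ Uf μ f δ, ∫ ω in A, r ω ∂μ ≤ y) : Radv μ f δ A ≤ y :=
  csSup_le ⟨_, _, const_one_mem_Uf hf1 hδ, rfl⟩ (by rintro _ ⟨r, hr, rfl⟩; exact h r hr)

lemma measureReal_le_Radv (hf1 : f 1 = 0) (hδ : 0 ≤ δ) (A : Set Ω) :
    μ.real A ≤ Radv μ f δ A := by
  simpa using setIntegral_le_Radv (const_one_mem_Uf hf1 hδ) A

lemma Radv_le_one (hf1 : f 1 = 0) (hδ : 0 ≤ δ) (A : Set Ω) : Radv μ f δ A ≤ 1 :=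
  Radv_le_of_forall_le hf1 hδ fun _ hr => setIntegral_le_one_of_mem_Uf hr A

lemma Radv_add_le (hf : ConvexOn ℝ univ f) (hf1 : f 1 = 0) (hδ : 0 ≤ δ) {A B : Set Ω}
    (hA : MeasurableSet A) (hB : MeasurableSet B) (hAB : μ A ≤ μ B) (hA1 : μ.real A < 1) :
    Radv μ f δ A + (μ.real B - μ.real A) * (1 - Radv μ f δ A) / (1 - μ.real A)
      ≤ Radv μ f δ B := by
  have hpq : μ.real A ≤ μ.real B := ENNReal.toReal_mono (measure_ne_top μ B) hAB
  suffices Radv μ f δ A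
      ≤ Radv μ f δ B - (μ.real B - μ.real A) * (1 - Radv μ f δ A) / (1 - μ.real A) by linarith
  refine Radv_le_of_forall_le hf1 hδ fun r hr => ?_
  obtain ⟨r', hr', hr'B⟩ := exists_mem_Uf_setIntegral_eq hf hr hA hB hAB hA1
  have hmono : (μ.real B - μ.real A) * (1 - Radv μ f δ A) / (1 - μ.real A)
      ≤ (μ.real B - μ.real A) * (1 - ∫ ω in A, r ω ∂μ) / (1 - μ.real A) := by
    gcongr; linarith [setIntegral_le_Radv hr A]
  linarith [setIntegral_le_Radv hr' B]

lemma Radv_mono (hf : ConvexOn ℝ univ f) (hf1 : f 1 = 0) (hδ : 0 ≤ δ) {A B : Set Ω}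
    (hA : MeasurableSet A) (hB : MeasurableSet B) (hAB : μ A ≤ μ B) :
    Radv μ f δ A ≤ Radv μ f δ B := by
  have hpq : μ.real A ≤ μ.real B := ENNReal.toReal_mono (measure_ne_top μ B) hAB
  rcases lt_or_ge (μ.real A) 1 with hA1 | hA1
  · have hgain : 0 ≤ (μ.real B - μ.real A) * (1 - Radv μ f δ A) / (1 - μ.real A) :=
      div_nonneg (mul_nonneg (by linarith) (by linarith [Radv_le_one (μ := μ) hf1 hδ A]))
        (by linarith)
    linarith [Radv_add_le hf hf1 hδ hA hB hAB hA1]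
  · linarith [Radv_le_one (μ := μ) hf1 hδ A, measureReal_le_Radv (μ := μ) hf1 hδ B]

lemma Radv_lt_Radv (hf : ConvexOn ℝ univ f) (hf1 : f 1 = 0) (hδ : 0 ≤ δ) {A B : Set Ω}
    (hA : MeasurableSet A) (hB : MeasurableSet B) (hAB : μ A < μ B) (hRA : Radv μ f δ A < 1) :
    Radv μ f δ A < Radv μ f δ B := by
  have hpq : μ.real A < μ.real B :=
    (ENNReal.toReal_lt_toReal (measure_ne_top μ A) (measure_ne_top μ B)).mpr hAB
  have hA1 : μ.real A < 1 := hpq.trans_le measureReal_le_one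
  have hgain : 0 < (μ.real B - μ.real A) * (1 - Radv μ f δ A) / (1 - μ.real A) :=
    div_pos (mul_pos (by linarith) (by linarith)) (by linarith)
  linarith [Radv_add_le hf hf1 hδ hA hB hAB.le hA1]

end AdversarialRisk

theorem stmt4_general {Ω : Type*} [MeasurableSpace Ω] (μ : Measure Ω) [IsProbabilityMeasure μ]
    (f : ℝ → ℝ) (hconv : ConvexOn ℝ Set.univ f)
    (hf1 : f 1 = 0) (δ : ℝ) (hδ : 0 < δ)
    (𝒜 : Set (Set Ω)) (h𝒜m : ∀ A ∈ 𝒜, MeasurableSet A)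
    (hinf : sInf (Radv μ f δ '' 𝒜) < 1) :
    ∀ A ∈ 𝒜, ((∀ B ∈ 𝒜, Radv μ f δ A ≤ Radv μ f δ B) ↔ (∀ B ∈ 𝒜, μ A ≤ μ B)) := by
  intro A hA
  refine ⟨fun hmin B hB => ?_, fun hmin B hB =>
    Radv_mono hconv hf1 hδ.le (h𝒜m A hA) (h𝒜m B hB) (hmin B hB)⟩
  by_contra! hBA
  have hRA : Radv μ f δ A < 1 :=
    (le_csInf ⟨_, mem_image_of_mem _ hA⟩ (forall_mem_image.2 hmin)).trans_lt hinf
  have hRB : Radv μ f δ B < 1 :=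
    (Radv_mono hconv hf1 hδ.le (h𝒜m B hB) (h𝒜m A hA) hBA.le).trans_lt hRA
  exact (hmin B hB).not_gt (Radv_lt_Radv hconv hf1 hδ.le (h𝒜m B hB) (h𝒜m A hA) hBA hRB)

/-- In the regime where the infimum of the adversarial risk over a family `𝒜` of error sets
is below `1`, adversarial risk minimization and ordinary risk minimization with the 0-1 loss
have exactly the same minimizers over `𝒜`. -/
theorem stmt4 {Ω : Type*} [MeasurableSpace Ω] (μ : Measure Ω) [IsProbabilityMeasure μ]
    (f : ℝ → ℝ) (hconv : ConvexOn ℝ Set.univ f) (hdiff : Differentiable ℝ f)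
    (hf1 : f 1 = 0) (δ : ℝ) (hδ : 0 < δ)
    (𝒜 : Set (Set Ω)) (h𝒜ne : 𝒜.Nonempty) (h𝒜m : ∀ A ∈ 𝒜, MeasurableSet A)
    (hinf : sInf (Radv μ f δ '' 𝒜) < 1) :
    ∀ A ∈ 𝒜, ((∀ B ∈ 𝒜, Radv μ f δ A ≤ Radv μ f δ B) ↔ (∀ B ∈ 𝒜, μ A ≤ μ B)) :=
  stmt4_general μ f hconv hf1 δ hδ 𝒜 h𝒜m hinf
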